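/- arXiv:1609.05732 — 3 statements merged into one kernel-verified Lean document; each statement's English description precedes it below -/
import Mathlib

section
/- Let P(k), k ≥ 0, be nonnegative sub-stochastic matrices with single-step influence indicators α(k) = ξ - P(k)ξ, and suppose the diagonal entries satisfy p_{ii}(k) ≥ w_i(k)/w_i(k+1) for positive nondecreasing weights w_i. Then for all t > s ≥ 0, the multi-step indicator satisfies the entrywise inequality α_i(t:s) ≥ (w_i(s)/w_i(t))·∑_{k=s}^{t-1} α_i(k) for every i. -/
/-!
Write `d(t) = ξ - P(t:s) ξ`. Since `P(t+1:s) = P(t) P(t:s)`, the deficit satisfies the recursion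
`d(t+1) = α(t) + P(t) d(t)`. All entries involved are nonnegative, so discarding the off-diagonal
part of `P(t)` gives `d_i(t+1) ≥ α_i(t) + (w_i(t)/w_i(t+1)) d_i(t)`, and induction on `t`
closes the bound because the weight ratios telescope and `w_i(s)/w_i(t+1) ≤ 1`.
-/

/-- The backward product `P(t:k) = P(t-1) ⋯ P(k)`, with `P(k:k) = I` (and `= I` also if `t ≤ k`). -/
def backProd {m : ℕ} (P : ℕ → Matrix (Fin m) (Fin m) ℝ) (k : ℕ) :
    ℕ → Matrix (Fin m) (Fin m) ℝ
  | 0 => 1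
  | t + 1 => if t + 1 ≤ k then 1 else P t * backProd P k t

open Matrix Finset

theorem Matrix.sub_mulVec_mul {n R : Type*} [Fintype n] [Ring R] (A B : Matrix n n R)
    (ξ : n → R) : ξ - (A * B) *ᵥ ξ = (ξ - A *ᵥ ξ) + A *ᵥ (ξ - B *ᵥ ξ) := by
  rw [← mulVec_mulVec, mulVec_sub]
  abel

theorem Matrix.diag_mul_le_mulVec {n R : Type*} [Fintype n] [Semiring R] [PartialOrder R]
    [IsOrderedRing R] {A : Matrix n n R} {v : n → R} (hA : ∀ i j, 0 ≤ A i j) (hv : 0 ≤ v)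
    (i : n) : A i i * v i ≤ (A *ᵥ v) i :=
  single_le_sum (f := fun j => A i j * v j) (fun j _ => mul_nonneg (hA i j) (hv j)) (mem_univ i)

section backProd

variable {m : ℕ} (P : ℕ → Matrix (Fin m) (Fin m) ℝ)

theorem backProd_succ {s t : ℕ} (hst : s ≤ t) : backProd P s (t + 1) = P t * backProd P s t := by
  simp [backProd, show ¬ t + 1 ≤ s by omega]

theorem backProd_self (s : ℕ) : backProd P s s = 1 := by
  cases s <;> simp [backProd]

variable {P}

theorem le_sub_backProd_mulVec (hP : ∀ k i j, 0 ≤ P k i j) {ξ : Fin m → ℝ}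
    (hα : ∀ k, 0 ≤ ξ - P k *ᵥ ξ) {w : Fin m → ℕ → ℝ} (hwpos : ∀ i k, 0 < w i k)
    (hwmono : ∀ i, Monotone (w i)) (hdiag : ∀ k i, w i k / w i (k + 1) ≤ P k i i)
    {s t : ℕ} (hst : s ≤ t) (i : Fin m) :
    w i s / w i t * ∑ k ∈ Ico s t, (ξ - P k *ᵥ ξ) i ≤ (ξ - backProd P s t *ᵥ ξ) i := by
  induction t, hst using Nat.le_induction generalizing i with
  | base => simp [backProd_self]
  | succ t hst ih =>
    set d := ξ - backProd P s t *ᵥ ξ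
    set a := ξ - P t *ᵥ ξ
    set S := ∑ k ∈ Ico s t, (ξ - P k *ᵥ ξ) i
    have hd : 0 ≤ d := fun j =>
      (mul_nonneg (div_pos (hwpos j s) (hwpos j t)).le
        (sum_nonneg fun k _ => hα k j)).trans (ih j)
    have hratio : w i s / w i (t + 1) ≤ 1 :=
      (div_le_one (hwpos i _)).2 (hwmono i (by omega))
    calc w i s / w i (t + 1) * ∑ k ∈ Ico s (t + 1), (ξ - P k *ᵥ ξ) i
        = w i s / w i (t + 1) * a i + w i t / w i (t + 1) * (w i s / w i t * S) := by
          have := (hwpos i t).ne'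
          rw [sum_Ico_succ_top hst]
          field_simp
          ring
      _ ≤ a i + P t i i * d i := by
          gcongr ?_ + ?_
          · exact mul_le_of_le_one_left (hα t i) hratio
          · exact mul_le_mul_of_nonneg (hdiag t i) (ih i)
              (div_pos (hwpos i t) (hwpos i _)).le (hd i)
      _ ≤ a i + (P t *ᵥ d) i := by gcongr; exact diag_mul_le_mulVec (hP t) hd i
      _ = (ξ - backProd P s (t + 1) *ᵥ ξ) i := by
          rw [backProd_succ P hst, sub_mulVec_mul]
          rfl

end backProd

/-- Lemma 1: entrywise lower bound on the multi-step influence indicator,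
`α_i(t:s) ≥ (w_i(s)/w_i(t)) ∑_{k=s}^{t-1} α_i(k)`. -/
theorem stmt_5 (m : ℕ) (P : ℕ → Matrix (Fin m) (Fin m) ℝ)
    (hnonneg : ∀ k i j, 0 ≤ P k i j)
    (hsub : ∀ k i, ∑ j, P k i j ≤ 1)
    (w : Fin m → ℕ → ℝ)
    (hwpos : ∀ i k, 0 < w i k)
    (hwmono : ∀ i, Monotone (w i))
    (hdiag : ∀ k i, P k i i ≥ w i k / w i (k + 1))
    (ξ : Fin m → ℝ) (hξ : ξ = fun _ => 1)
    (α : ℕ → Fin m → ℝ) (hα : ∀ k, α k = ξ - (P k).mulVec ξ)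
    (s t : ℕ) (hst : s < t) :
    ∀ i, (ξ - (backProd P s t).mulVec ξ) i ≥
      (w i s / w i t) * ∑ k ∈ Finset.Ico s t, α k i := by
  have hα_nonneg : ∀ k, 0 ≤ ξ - P k *ᵥ ξ := fun k i => by
    simpa [hξ, mulVec, dotProduct] using hsub k i
  intro i
  simpa only [hα] using le_sub_backProd_mulVec hnonneg hα_nonneg hwpos hwmono hdiag hst.le i
end

section
/- Let B be an (n-1)×(n-1) nonnegative matrix and E a diagonal matrix with positive diagonal entries e_{ii} ≥ ∑_j b_{ij} for all i, with strict inequality e_{ii} > ∑_j b_{ij} for at least those i in a nonempty set S. Suppose that for every index i there is a path i = i₀, i₁, …, i_m with b_{i_k i_{k+1}} > 0 and i_m ∈ S. Then every eigenvalue λ of E⁻¹B satisfies |λ| < 1. -/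
/-!
Maximum-modulus argument. Suppose `A ≥ 0` has row sums at most `1` and `A u = λ u` with
`|λ| ≥ 1`, `u ≠ 0`. At an index `i` where `|u i|` is maximal,
`|u i| ≤ ∑ⱼ A i j |u j| ≤ (∑ⱼ A i j) |u i| ≤ |u i|`, so equality holds throughout: row `i` sums to
`1` and every `j` with `A i j > 0` is again maximal. Maximality therefore propagates along
positive entries to some row with sum `< 1`, a contradiction.
-/

open Finset

lemma eq_of_le_weighted_sum {ι : Type*} [Fintype ι] {a x : ι → ℝ} {M : ℝ}
    (ha : ∀ j, 0 ≤ a j) (hsum : ∑ j, a j ≤ 1) (hx : ∀ j, x j ≤ M) (hM : 0 ≤ M)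
    (hle : M ≤ ∑ j, a j * x j) :
    (∀ j, 0 < a j → x j = M) ∧ (0 < M → 1 ≤ ∑ j, a j) := by
  have hgap_nonneg : ∀ j ∈ univ, 0 ≤ a j * (M - x j) :=
    fun j _ => mul_nonneg (ha j) (sub_nonneg.mpr (hx j))
  have hdefect_nonneg : 0 ≤ M * (1 - ∑ j, a j) := mul_nonneg hM (sub_nonneg.mpr hsum)
  have hsplit : ∑ j, a j * (M - x j) + M * (1 - ∑ j, a j) = M - ∑ j, a j * x j := by
    simp only [mul_sub, sum_sub_distrib, ← sum_mul]
    ring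
  have hgap : ∑ j, a j * (M - x j) = 0 := by
    linarith [sum_nonneg hgap_nonneg]
  refine ⟨fun j hj => ?_, fun hMpos => ?_⟩
  · have := (sum_eq_zero_iff_of_nonneg hgap_nonneg).mp hgap j (mem_univ j)
    rcases mul_eq_zero.mp this with h | h
    · exact absurd h hj.ne'
    · linarith
  · nlinarith

namespace Matrix

variable {ι : Type*} [Fintype ι] {A : Matrix ι ι ℝ} {u : ι → ℂ} {lam : ℂ}

lemma norm_le_sum_mul_norm_of_mulVec_eq_smul (hA : ∀ i j, 0 ≤ A i j)
    (heig : A.map (↑) *ᵥ u = lam • u) (hlam : 1 ≤ ‖lam‖) (i : ι) :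
    ‖u i‖ ≤ ∑ j, A i j * ‖u j‖ :=
  calc ‖u i‖ ≤ ‖lam‖ * ‖u i‖ := le_mul_of_one_le_left (norm_nonneg _) hlam
    _ = ‖∑ j, (A i j : ℂ) * u j‖ := by
        rw [← norm_mul, ← smul_eq_mul, ← Pi.smul_apply, ← heig]
        rfl
    _ ≤ ∑ j, ‖(A i j : ℂ) * u j‖ := norm_sum_le _ _
    _ = ∑ j, A i j * ‖u j‖ := by
        simp only [norm_mul, Complex.norm_real, Real.norm_of_nonneg (hA i _)]

lemma norm_eq_of_mulVec_eq_smul_of_forall_norm_le (hA : ∀ i j, 0 ≤ A i j)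
    (hrow : ∀ i, ∑ j, A i j ≤ 1) (heig : A.map (↑) *ᵥ u = lam • u) (hlam : 1 ≤ ‖lam‖)
    {i : ι} (hmax : ∀ j, ‖u j‖ ≤ ‖u i‖) :
    (∀ j, 0 < A i j → ‖u j‖ = ‖u i‖) ∧ (0 < ‖u i‖ → 1 ≤ ∑ j, A i j) :=
  eq_of_le_weighted_sum (hA i) (hrow i) hmax (norm_nonneg _)
    (norm_le_sum_mul_norm_of_mulVec_eq_smul hA heig hlam i)

lemma forall_norm_le_of_reflTransGen (hA : ∀ i j, 0 ≤ A i j)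
    (hrow : ∀ i, ∑ j, A i j ≤ 1) (heig : A.map (↑) *ᵥ u = lam • u) (hlam : 1 ≤ ‖lam‖)
    {a b : ι} (hab : Relation.ReflTransGen (fun a b => 0 < A a b) a b)
    (ha : ∀ l, ‖u l‖ ≤ ‖u a‖) : ∀ l, ‖u l‖ ≤ ‖u b‖ := by
  induction hab with
  | refl => exact ha
  | tail _ hbc ih =>
    rw [(norm_eq_of_mulVec_eq_smul_of_forall_norm_le hA hrow heig hlam ih).1 _ hbc]
    exact ih

theorem norm_lt_one_of_mulVec_eq_smul (hA : ∀ i j, 0 ≤ A i j)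
    (hrow : ∀ i, ∑ j, A i j ≤ 1) (S : Set ι) (hstrict : ∀ i ∈ S, ∑ j, A i j < 1)
    (hreach : ∀ i, ∃ j ∈ S, Relation.ReflTransGen (fun a b => 0 < A a b) i j)
    (hu : u ≠ 0) (heig : A.map (↑) *ᵥ u = lam • u) : ‖lam‖ < 1 := by
  by_contra! hlam
  obtain ⟨k, hk⟩ := Function.ne_iff.mp hu
  have : Nonempty ι := ⟨k⟩
  obtain ⟨i, hi⟩ := Finite.exists_max fun j => ‖u j‖
  obtain ⟨j, hjS, hij⟩ := hreach i
  have hj := forall_norm_le_of_reflTransGen hA hrow heig hlam hij hi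
  have hpos : 0 < ‖u j‖ := (norm_pos_iff.mpr hk).trans_le (hj k)
  exact (hstrict j hjS).not_ge
    ((norm_eq_of_mulVec_eq_smul_of_forall_norm_le hA hrow heig hlam hj).2 hpos)

end Matrix

theorem stmt_6_general (m : ℕ) (B : Matrix (Fin m) (Fin m) ℝ) (e : Fin m → ℝ)
    (hB : ∀ i j, 0 ≤ B i j)
    (hepos : ∀ i, 0 < e i)
    (hdom : ∀ i, ∑ j, B i j ≤ e i)
    (S : Finset (Fin m))
    (hstrict : ∀ i ∈ S, ∑ j, B i j < e i)
    (hreach : ∀ i, ∃ j ∈ S, Relation.ReflTransGen (fun a b => 0 < B a b) i j)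
    (lam : ℂ) (u : Fin m → ℂ) (hu : u ≠ 0)
    (heig : (Matrix.of fun i j => ((B i j / e i : ℝ) : ℂ)).mulVec u = lam • u) :
    ‖lam‖ < 1 := by
  have hrowSum : ∀ i, ∑ j, B i j / e i = (∑ j, B i j) / e i := fun i => (sum_div ..).symm
  refine Matrix.norm_lt_one_of_mulVec_eq_smul (A := Matrix.of fun i j => B i j / e i)
    (fun i j => div_nonneg (hB i j) (hepos i).le)
    (fun i => (hrowSum i).trans_le (div_le_one_of_le₀ (hdom i) (hepos i).le))
    (S : Set (Fin m))
    (fun i hi => (hrowSum i).trans_lt ((div_lt_one (hepos i)).mpr (hstrict i hi)))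
    (fun i => ?_) hu heig
  obtain ⟨j, hjS, hij⟩ := hreach i
  exact ⟨j, hjS, Relation.ReflTransGen.mono (fun a b hab => div_pos hab (hepos a)) _ _ hij⟩

/-- Spectral lemma: if `B ≥ 0`, `E = diag(e)` with `e_i ≥ ∑_j b_{ij}`, strict on a set `S`
reachable from every index along edges of positive entries of `B`, then every complex
eigenvalue of `E⁻¹B` has modulus strictly less than 1. -/
theorem stmt_6 (m : ℕ) (B : Matrix (Fin m) (Fin m) ℝ) (e : Fin m → ℝ)
    (hB : ∀ i j, 0 ≤ B i j)
    (hepos : ∀ i, 0 < e i)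
    (hdom : ∀ i, ∑ j, B i j ≤ e i)
    (S : Finset (Fin m)) (hS : S.Nonempty)
    (hstrict : ∀ i ∈ S, ∑ j, B i j < e i)
    (hreach : ∀ i, ∃ j ∈ S, Relation.ReflTransGen (fun a b => 0 < B a b) i j)
    (lam : ℂ) (u : Fin m → ℂ) (hu : u ≠ 0)
    (heig : (Matrix.of fun i j => ((B i j / e i : ℝ) : ℂ)).mulVec u = lam • u) :
    ‖lam‖ < 1 :=
  stmt_6_general m B e hB hepos hdom S hstrict hreach lam u hu heig
end

section
/- Let x(t) evolve by the fixed-graph increasing-self-confidence dynamics x(t+1) = ((t+1)D)⁻¹(tD + A)x(t), where A is the adjacency matrix of a fixed directed graph with invertible outdegree matrix D. Define S(t) = x(0) + x(1) + ⋯ + x(t). Then S(t+1) = (I + D⁻¹A/(t+1))·S(t), and consequently x(t) = (D⁻¹A/t)·∏_{s=1}^{t-1}(I + D⁻¹A/s)·x(0) for all t ≥ 1. -/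
/-- Closed-form product formula for the fixed-graph increasing-self-confidence dynamics:
from `(t+1)D x(t+1) = (tD + A) x(t)` with `D` invertible, the partial sums
`S(t) = x(0)+⋯+x(t)` satisfy `S(t+1) = (I + D⁻¹A/(t+1)) S(t)`, and
`x(t) = (D⁻¹A/t) ∏_{s=1}^{t-1} (I + D⁻¹A/s) x(0)` for `t ≥ 1`. -/
theorem stmt_16 (n : ℕ) (A D : Matrix (Fin n) (Fin n) ℝ) (hD : IsUnit D.det)
    (x : ℕ → Fin n → ℝ)
    (hdyn : ∀ t : ℕ, (((t : ℝ) + 1) • D).mulVec (x (t + 1)) =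
      (((t : ℝ) • D + A)).mulVec (x t))
    (S : ℕ → Fin n → ℝ) (hS : ∀ t, S t = ∑ s ∈ Finset.range (t + 1), x s) :
    (∀ t : ℕ, S (t + 1) =
      ((1 : Matrix (Fin n) (Fin n) ℝ) + (((t : ℝ) + 1))⁻¹ • (D⁻¹ * A)).mulVec (S t)) ∧
    (∀ t : ℕ, 1 ≤ t → x t =
      (((t : ℝ))⁻¹ • (D⁻¹ * A) *
        ((List.range (t - 1)).map fun s =>
          (1 : Matrix (Fin n) (Fin n) ℝ) + (((s : ℝ) + 1))⁻¹ • (D⁻¹ * A)).prod).mulVec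
        (x 0)) := by
  have hDinv : D⁻¹ * D = 1 := Matrix.nonsing_inv_mul D hD
  set B := D⁻¹ * A with hB
  set f : ℕ → Matrix (Fin n) (Fin n) ℝ :=
    fun s => (1 : Matrix (Fin n) (Fin n) ℝ) + (((s : ℝ) + 1))⁻¹ • B with hf
  have hcommf : ∀ s, B * f s = f s * B := by
    intro s
    simp only [hf, mul_add, add_mul, mul_one, one_mul, Matrix.mul_smul, Matrix.smul_mul]
  have hdyn' : ∀ t : ℕ, ((t : ℝ) + 1) • x (t + 1) = (t : ℝ) • x t + B.mulVec (x t) := by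
    intro t
    have h := congrArg (D⁻¹.mulVec) (hdyn t)
    simpa [Matrix.mulVec_smul, Matrix.add_mulVec, Matrix.smul_mulVec,
      Matrix.mulVec_add, Matrix.mulVec_mulVec, hDinv] using h
  have hSsucc : ∀ t, S (t + 1) = S t + x (t + 1) := by
    intro t
    simp [hS, Finset.sum_range_succ]
  have key : ∀ t : ℕ, ((t : ℝ) + 1) • x (t + 1) = B.mulVec (S t) := by
    intro t
    induction t with
    | zero => simpa [hS] using hdyn' 0
    | succ k ih =>
        have h := hdyn' (k + 1)
        push_cast at h ⊢
        rw [h, hSsucc, Matrix.mulVec_add, ← ih]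
  have part1 : ∀ t : ℕ, S (t + 1) = (f t).mulVec (S t) := by
    intro t
    have hne : ((t : ℝ) + 1) ≠ 0 := by positivity
    have hx : x (t + 1) = ((t : ℝ) + 1)⁻¹ • B.mulVec (S t) := by
      rw [← key t, inv_smul_smul₀ hne]
    rw [hSsucc, hx, hf]
    simp [Matrix.add_mulVec, Matrix.one_mulVec, Matrix.smul_mulVec]
  have hcommP : ∀ m, B * ((List.range m).map f).prod = ((List.range m).map f).prod * B := by
    intro m
    induction m with
    | zero => simp
    | succ k ih =>
        rw [List.range_succ, List.map_append, List.prod_append, List.map_singleton,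
          List.prod_singleton, ← mul_assoc, ih, mul_assoc, hcommf, ← mul_assoc]
  have hSP : ∀ m, S m = (((List.range m).map f).prod).mulVec (x 0) := by
    intro m
    induction m with
    | zero => simp [hS]
    | succ k ih =>
        have hcomm : f k * (List.map f (List.range k)).prod =
            (List.map f (List.range k)).prod * f k := by
          simp only [hf]
          rw [add_mul, mul_add, one_mul, mul_one, Matrix.smul_mul, Matrix.mul_smul, hcommP]
        rw [part1, ih, Matrix.mulVec_mulVec, hcomm, List.range_succ, List.map_append,
          List.prod_append, List.map_singleton, List.prod_singleton]
  refine ⟨fun t => part1 t, fun t ht => ?_⟩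
  obtain ⟨k, rfl⟩ : ∃ k, t = k + 1 := ⟨t - 1, (Nat.succ_pred_eq_of_pos ht).symm⟩
  have hne : ((k : ℝ) + 1) ≠ 0 := by positivity
  have hx : x (k + 1) = ((k : ℝ) + 1)⁻¹ • B.mulVec (S k) := by
    rw [← key k, inv_smul_smul₀ hne]
  simp only [List.pure_def, List.bind_eq_flatMap, ← List.map_eq_flatMap, List.map_map,
    Function.comp_def]
  rw [hx, hSP k, Nat.add_sub_cancel]
  have hc : (((k + 1 : ℕ) : ℝ))⁻¹ = ((k : ℝ) + 1)⁻¹ := by push_cast; ring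
  rw [hc, Matrix.smul_mul, Matrix.smul_mulVec, Matrix.mulVec_mulVec]
end
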